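/- arXiv:2205.06558 — 5 statements merged into one kernel-verified Lean document; each statement's English description precedes it below -/
import Mathlib

section
/- Suppose loads ℓ₁,…,ℓₙ satisfy |ℓᵢ − ℓⱼ| ≤ T for all i,j, where T = (Σᵢ Tᵢ)/n and Tₖ = C − ℓₖ for a constant C. If two indices i, j ∈ [n] are chosen independently and uniformly at random, and then index i is selected with probability 1/2 + (ℓⱼ − ℓᵢ)/(2T) (otherwise j is selected), then for each fixed k ∈ [n] the probability that k is selected equals Tₖ/(nT). -/
/-!
Bin `k` is selected either as the first index `i = k`, with probability `1/2 + (ℓⱼ - ℓₖ)/(2T)`,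
or as the second index `j = k`, with the same probability after renaming the other index; so
its probability is `(2/n²) Σⱼ (1/2 + (ℓⱼ - ℓₖ)/(2T))`. The mean load is `C - T`, which turns this
sum into `(n/2)(1 + (C - T - ℓₖ)/T) = n Tₖ/(2T)`.
-/

open Finset

theorem sum_sum_ite_fst_add_ite_snd {ι M : Type*} [Fintype ι] [DecidableEq ι]
    [AddCommMonoid M] (f g : ι → ι → M) (k : ι) :
    ∑ i, ∑ j, ((if i = k then f i j else 0) + (if j = k then g i j else 0)) =
      ∑ j, f k j + ∑ i, g i k := by
  simp only [sum_add_distrib, sum_ite_eq', mem_univ, if_true]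
  rw [sum_comm]
  simp only [sum_ite_eq', mem_univ, if_true]

theorem sum_half_add_sub_div_eq_of_sum_eq {ι : Type*} [Fintype ι] (x : ι → ℝ) (μ T : ℝ)
    (hμ : ∑ j, x j = Fintype.card ι * μ) (k : ι) :
    ∑ j, (1 / 2 + (x j - x k) / (2 * T)) = Fintype.card ι / 2 * (1 + (μ - x k) / T) := by
  simp only [sum_add_distrib, ← sum_div, sum_sub_distrib, hμ, sum_const, card_univ,
    nsmul_eq_mul]
  ring

theorem stmt0_general (n : ℕ) (ℓ : Fin n → ℕ) (C : ℝ)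
    (T : ℝ) (hT : T = (∑ i, (C - (ℓ i : ℝ))) / n) (hTpos : 0 < T) (k : Fin n) :
    (1 / (n : ℝ) ^ 2) *
        ∑ i, ∑ j,
          ((if i = k then (1 / 2 + ((ℓ j : ℝ) - (ℓ i : ℝ)) / (2 * T)) else 0) +
           (if j = k then (1 / 2 + ((ℓ i : ℝ) - (ℓ j : ℝ)) / (2 * T)) else 0)) =
      (C - (ℓ k : ℝ)) / (n * T) := by
  have hn : (n : ℝ) ≠ 0 := Nat.cast_ne_zero.mpr (Fin.pos k).ne'
  have hmean : ∑ i, (ℓ i : ℝ) = Fintype.card (Fin n) * (C - T) := by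
    rw [hT, Fintype.card_fin, sum_sub_distrib, sum_const, card_univ, Fintype.card_fin,
      nsmul_eq_mul]
    field_simp
    ring
  rw [sum_sum_ite_fst_add_ite_snd, sum_half_add_sub_div_eq_of_sum_eq _ _ _ hmean,
    Fintype.card_fin]
  field_simp
  ring

/-- The probability that bin `k` is selected by the two-step
ModulatedGreedy random process equals `Tₖ/(nT)`. -/
theorem stmt0 (n : ℕ) (hn : 0 < n) (ℓ : Fin n → ℕ) (C : ℝ)
    (hC : ∀ k, (ℓ k : ℝ) ≤ C)
    (T : ℝ) (hT : T = (∑ i, (C - (ℓ i : ℝ))) / n) (hTpos : 0 < T)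
    (hgap : ∀ i j, |(ℓ i : ℝ) - (ℓ j : ℝ)| ≤ T) (k : Fin n) :
    (1 / (n : ℝ) ^ 2) *
        ∑ i, ∑ j,
          ((if i = k then (1 / 2 + ((ℓ j : ℝ) - (ℓ i : ℝ)) / (2 * T)) else 0) +
           (if j = k then (1 / 2 + ((ℓ i : ℝ) - (ℓ j : ℝ)) / (2 * T)) else 0)) =
      (C - (ℓ k : ℝ)) / (n * T) :=
  stmt0_general n ℓ C T hT hTpos k
end

section
/- In the stone game with Qn labeled stones and an oblivious sequence of Activate (move a uniformly random stone from the inactive bag to the active bag) and Deactivate(r) (move the r-th most recently activated stone back to the inactive bag) operations: at any fixed time, if the inactive bag contains s stones, then the set of stones in the inactive bag is a uniformly random s-element subset of all Qn stones. -/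
/-!
The game is equivariant under relabelling the stones: a permutation `σ` maps a uniform choice
from the inactive bag to a uniform choice from the relabelled bag, and `Deactivate r` only looks
at activation order, not at labels. Since the adversary's sequence is fixed, the law of the run is
therefore invariant under every `σ`, and so is the law of the inactive bag. As permutations act
transitively on subsets of a given size, all `s`-subsets are equally likely.
-/

/-- Operations of the stone game: `activate` moves a uniformly random stone from
the inactive bag to the active bag; `deactivate r` moves the `r`-th most recently
activated stone back to the inactive bag. -/
inductive SOp where
  | activate : SOp
  | deactivate : ℕ → SOp

/-- One step of the stone game: the state is the list of active stones,
most recently activated first; the inactive bag is the complement. -/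
noncomputable def sstep {N : ℕ} (l : List (Fin N)) : SOp → PMF (List (Fin N))
  | SOp.activate =>
      if h : ((l.toFinset)ᶜ : Finset (Fin N)).Nonempty then
        (PMF.uniformOfFinset _ h).map (fun x => x :: l)
      else PMF.pure l
  | SOp.deactivate r => PMF.pure (l.eraseIdx (r - 1))

/-- Running an oblivious sequence of operations from the all-inactive state. -/
noncomputable def srun (N : ℕ) (ops : List SOp) : PMF (List (Fin N)) :=
  ops.foldl (fun μ op => μ.bind (fun l => sstep l op)) (PMF.pure [])

open scoped Pointwise

namespace PMF

variable {α β : Type*}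

theorem map_apply_of_injective (p : PMF α) {f : α → β} (hf : f.Injective) (a : α) :
    p.map f (f a) = p a := by
  rw [← toOuterMeasure_apply_singleton, toOuterMeasure_map_apply, ← Set.image_singleton,
    hf.preimage_image, toOuterMeasure_apply_singleton]

theorem apply_eq_of_map_eq_self {p : PMF α} {f : α → α} (hf : f.Injective) (hp : p.map f = p)
    (a : α) : p (f a) = p a := by
  conv_lhs => rw [← hp]
  exact p.map_apply_of_injective hf a

theorem map_uniformOfFinset_of_injective [DecidableEq β] {s : Finset α} (hs : s.Nonempty)
    {f : α → β} (hf : f.Injective) :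
    (uniformOfFinset s hs).map f = uniformOfFinset (s.image f) (hs.image f) := by
  ext b
  by_cases hb : b ∈ s.image f
  · obtain ⟨a, ha, rfl⟩ := Finset.mem_image.mp hb
    simp [map_apply_of_injective _ hf, uniformOfFinset_apply, ha, hb,
      Finset.card_image_of_injective _ hf]
  · rw [uniformOfFinset_apply_of_notMem _ hb, apply_eq_zero_iff, support_map,
      support_uniformOfFinset]
    simpa using hb

end PMF

theorem Finset.smul_finset_compl {G α : Type*} [Group G] [MulAction G α] [Fintype α]
    [DecidableEq α] (g : G) (s : Finset α) : g • sᶜ = (g • s)ᶜ := by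
  simp [← Finset.coe_inj, Set.smul_set_compl]

theorem List.toFinset_map_perm {α : Type*} [DecidableEq α] (σ : Equiv.Perm α) (l : List α) :
    (l.map σ).toFinset = σ • l.toFinset := by
  ext
  simp [Finset.mem_smul_finset]

theorem Finset.exists_perm_smul_eq_of_card_eq {α : Type*} [DecidableEq α] {s t : Finset α}
    (h : s.card = t.card) : ∃ σ : Equiv.Perm α, σ • s = t := by
  obtain ⟨σ, hσ⟩ := (Set.powersetCard.isPretransitive (α := α) (n := t.card)).exists_smul_eq
    ⟨s, h⟩ ⟨t, rfl⟩
  exact ⟨σ, by simpa using congrArg Subtype.val hσ⟩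

variable {N : ℕ}

theorem sstep_map_perm (σ : Equiv.Perm (Fin N)) (l : List (Fin N)) (op : SOp) :
    (sstep l op).map (List.map σ) = sstep (l.map σ) op := by
  cases op with
  | deactivate r => simp [sstep, PMF.pure_map, List.eraseIdx_map]
  | activate =>
    have hc : ((l.map σ).toFinset)ᶜ = σ • (l.toFinset)ᶜ := by
      rw [List.toFinset_map_perm, Finset.smul_finset_compl]
    simp only [sstep, hc, Finset.smul_finset_nonempty]
    split_ifs with h
    · rw [PMF.map_comp]
      convert congrArg (PMF.map (· :: l.map σ)) (PMF.map_uniformOfFinset_of_injective h σ.injective)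
        using 1
      · rw [PMF.map_comp]
        rfl
      · rfl
    · exact PMF.pure_map _ _

theorem srun_append_singleton (ops : List SOp) (op : SOp) :
    srun N (ops ++ [op]) = (srun N ops).bind (sstep · op) := by
  simp [srun, List.foldl_append]

theorem srun_map_perm (σ : Equiv.Perm (Fin N)) (ops : List SOp) :
    (srun N ops).map (List.map σ) = srun N ops := by
  induction ops using List.reverseRecOn with
  | nil => exact PMF.pure_map _ _
  | append_singleton ops op ih =>
    simp only [srun_append_singleton, PMF.map_bind, sstep_map_perm]
    conv_rhs => rw [← ih]
    rw [PMF.bind_map]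
    rfl

noncomputable def inactiveBag (N : ℕ) (ops : List SOp) : PMF (Finset (Fin N)) :=
  (srun N ops).map fun l => (l.toFinset)ᶜ

theorem inactiveBag_map_smul (σ : Equiv.Perm (Fin N)) (ops : List SOp) :
    (inactiveBag N ops).map (σ • ·) = inactiveBag N ops := by
  conv_rhs => rw [inactiveBag, ← srun_map_perm σ ops]
  simp only [inactiveBag, PMF.map_comp]
  congr 1
  funext l
  simp [List.toFinset_map_perm, Finset.smul_finset_compl]

theorem inactiveBag_apply_eq_of_card_eq (ops : List SOp) {S S' : Finset (Fin N)}
    (h : S.card = S'.card) : inactiveBag N ops S = inactiveBag N ops S' := by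
  obtain ⟨σ, rfl⟩ := Finset.exists_perm_smul_eq_of_card_eq h
  exact (PMF.apply_eq_of_map_eq_self (MulAction.injective σ) (inactiveBag_map_smul σ ops) S).symm

/-- in the `(Q,n)`-stone game, after any fixed oblivious sequence of
operations, the contents of the inactive bag form a uniformly random subset of the
`Qn` stones: any two subsets of the same size are equally likely. -/
theorem stmt1 (Q n : ℕ) (ops : List SOp) (S S' : Finset (Fin (Q * n)))
    (hcard : S.card = S'.card) :
    ((srun (Q * n) ops).map (fun l => (l.toFinset)ᶜ)) S =
    ((srun (Q * n) ops).map (fun l => (l.toFinset)ᶜ)) S' :=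
  inactiveBag_apply_eq_of_card_eq ops hcard
end

section
/- Let X₁, X₂, X₃, X₄ be the multinomial counts of N = ε₃m² i.i.d. uniform samples from {1,2,3,4}, with μ = N/4. Then with probability at least ε₁ (a positive constant), X₁ < max{X₂, X₃, X₄} − c√N for some constant c > 0; in particular X₁ is smaller than the maximum of the other three counts by Ω(√(ε₃)·m). -/
/-!
Write `X₀, …, X₃` for the counts. Encoding the sample values `0, 1, 2, 3` by the bit pairs
`11, 00, 10, 01` maps the samples injectively to `2N` bits of which `N + X₀ - X₁` are ones, so
each value of `X₀ - X₁` is taken with probability at most `C(2N, N) / 4 ^ N ≤ 1 / √(2N + 1)`.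
Hence `|X₀ - X₁| ≤ √N / 8` has probability at most `1 / 2`. Swapping the values `0` and `1`
exchanges the events `X₀ + √N / 8 < X₁` and `X₁ + √N / 8 < X₀`, so the first has probability at
least `1 / 4`, and on it `X₀ + √N / 8 < max {X₁, X₂, X₃}`.
-/

/-- The number of samples equal to `s` among `Z : Fin N → Fin 4`. -/
def multCount (N : ℕ) (Z : Fin N → Fin 4) (s : Fin 4) : ℕ :=
  (Finset.univ.filter (fun i : Fin N => Z i = s)).card

open Finset

theorem Nat.two_mul_add_one_mul_centralBinom_sq_le (n : ℕ) :
    (2 * n + 1) * n.centralBinom ^ 2 ≤ 16 ^ n := by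
  induction n with
  | zero => simp
  | succ n ih =>
    have hrec := Nat.succ_mul_centralBinom_succ n
    have hgrowth : (2 * n + 3) * (2 * n + 1) ≤ (2 * n + 2) ^ 2 := by nlinarith
    refine Nat.le_of_mul_le_mul_right (c := (n + 1) ^ 2) ?_ (by positivity)
    calc (2 * (n + 1) + 1) * (n + 1).centralBinom ^ 2 * (n + 1) ^ 2
        = (2 * n + 3) * ((n + 1) * (n + 1).centralBinom) ^ 2 := by ring
      _ = 4 * ((2 * n + 3) * (2 * n + 1)) * ((2 * n + 1) * n.centralBinom ^ 2) := by
          rw [hrec]; ring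
      _ ≤ 4 * (2 * n + 2) ^ 2 * 16 ^ n := by gcongr
      _ = 16 ^ (n + 1) * (n + 1) ^ 2 := by ring

theorem Nat.mul_centralBinom_le_four_pow {k n : ℕ} (hk : k ^ 2 ≤ 2 * n + 1) :
    k * n.centralBinom ≤ 4 ^ n := by
  refine (Nat.pow_le_pow_iff_left two_ne_zero).1 ?_
  calc (k * n.centralBinom) ^ 2 = k ^ 2 * n.centralBinom ^ 2 := mul_pow ..
    _ ≤ (2 * n + 1) * n.centralBinom ^ 2 := Nat.mul_le_mul_right _ hk
    _ ≤ 16 ^ n := n.two_mul_add_one_mul_centralBinom_sq_le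
    _ = (4 ^ n) ^ 2 := by rw [← pow_mul, mul_comm, pow_mul]; norm_num

theorem card_filter_mem_eq_sum_multCount {N : ℕ} (Z : Fin N → Fin 4) (T : Finset (Fin 4)) :
    #{i | Z i ∈ T} = ∑ s ∈ T, multCount N Z s := by
  rw [card_eq_sum_card_fiberwise (f := Z) (t := T) fun i hi => by simpa using hi]
  refine sum_congr rfl fun s hs => ?_
  rw [multCount, filter_filter]
  congr 1
  ext i
  simp only [mem_filter, mem_univ, true_and, and_iff_right_iff_imp]
  rintro rfl
  exact hs

theorem sum_multCount {N : ℕ} (Z : Fin N → Fin 4) : ∑ s, multCount N Z s = N := by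
  simpa using (card_filter_mem_eq_sum_multCount Z univ).symm

def twoBitEncoding {N : ℕ} (Z : Fin N → Fin 4) : Finset (Fin N ⊕ Fin N) :=
  (univ.filter fun i => Z i ∈ ({0, 2} : Finset (Fin 4))).disjSum
    (univ.filter fun i => Z i ∈ ({0, 3} : Finset (Fin 4)))

theorem twoBitEncoding_injective (N : ℕ) :
    Function.Injective (twoBitEncoding (N := N)) := by
  intro Z W h
  funext i
  have hl : Sum.inl i ∈ twoBitEncoding Z ↔ Sum.inl i ∈ twoBitEncoding W := by rw [h]
  have hr : Sum.inr i ∈ twoBitEncoding Z ↔ Sum.inr i ∈ twoBitEncoding W := by rw [h]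
  simp only [twoBitEncoding, inl_mem_disjSum, inr_mem_disjSum, mem_filter, mem_univ,
    true_and] at hl hr
  revert hl hr
  generalize Z i = a
  generalize W i = b
  revert a b
  decide

theorem card_twoBitEncoding_add {N : ℕ} (Z : Fin N → Fin 4) :
    #(twoBitEncoding Z) + multCount N Z 1 = N + multCount N Z 0 := by
  have htotal := sum_multCount Z
  rw [Fin.sum_univ_four] at htotal
  rw [twoBitEncoding, card_disjSum, card_filter_mem_eq_sum_multCount,
    card_filter_mem_eq_sum_multCount, sum_pair (by decide), sum_pair (by decide)]
  omega

theorem card_twoBitEncoding_eq_le_choose (N j : ℕ) :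
    #{Z : Fin N → Fin 4 | #(twoBitEncoding Z) = j} ≤ (2 * N).choose j := by
  calc #{Z : Fin N → Fin 4 | #(twoBitEncoding Z) = j}
      ≤ #(powersetCard j (univ : Finset (Fin N ⊕ Fin N))) :=
        card_le_card_of_injOn twoBitEncoding (fun Z hZ => by simpa using hZ)
          (twoBitEncoding_injective N).injOn
    _ = (2 * N).choose j := by simp [two_mul]

theorem card_multCount_band_le (N t : ℕ) :
    #{Z : Fin N → Fin 4 | multCount N Z 0 ≤ multCount N Z 1 + t ∧
        multCount N Z 1 ≤ multCount N Z 0 + t} ≤ (2 * t + 1) * N.centralBinom := by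
  have hmaps : ∀ Z ∈ ({Z : Fin N → Fin 4 | multCount N Z 0 ≤ multCount N Z 1 + t ∧
      multCount N Z 1 ≤ multCount N Z 0 + t} : Finset _),
      #(twoBitEncoding Z) ∈ Icc (N - t) (N + t) := by
    intro Z hZ
    have := card_twoBitEncoding_add Z
    have := (mem_filter.1 hZ).2
    rw [mem_Icc]
    omega
  calc _ ≤ N.centralBinom * #(Icc (N - t) (N + t)) :=
        card_le_mul_card_image_of_maps_to hmaps _ fun j _ =>
          (card_le_card (filter_subset_filter _ (filter_subset _ _))).trans
            ((card_twoBitEncoding_eq_le_choose N j).trans (Nat.choose_le_centralBinom j N))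
    _ ≤ (2 * t + 1) * N.centralBinom := by
        rw [mul_comm, Nat.card_Icc]
        gcongr
        omega

theorem multCount_perm_comp {N : ℕ} (σ : Equiv.Perm (Fin 4)) (Z : Fin N → Fin 4) (s : Fin 4) :
    multCount N (σ ∘ Z) s = multCount N Z (σ.symm s) := by
  simp only [multCount, Function.comp_apply, ← Equiv.eq_symm_apply]

theorem card_multCount_add_lt_comm (N : ℕ) (r : ℝ) :
    #{Z : Fin N → Fin 4 | (multCount N Z 1 : ℝ) + r < multCount N Z 0} =
      #{Z : Fin N → Fin 4 | (multCount N Z 0 : ℝ) + r < multCount N Z 1} := by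
  have hswap : ∀ Z : Fin N → Fin 4, multCount N (Equiv.swap 0 1 ∘ Z) 0 = multCount N Z 1 ∧
      multCount N (Equiv.swap 0 1 ∘ Z) 1 = multCount N Z 0 := fun Z =>
    ⟨multCount_perm_comp _ Z 0, multCount_perm_comp _ Z 1⟩
  refine card_nbij' (Equiv.swap 0 1 ∘ ·) (Equiv.swap 0 1 ∘ ·) ?_ ?_ ?_ ?_
  · intro Z hZ
    simpa [hswap Z] using hZ
  · intro Z hZ
    simpa [hswap Z] using hZ
  · intro Z _
    simp [Function.comp_def]
  · intro Z _
    simp [Function.comp_def]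

theorem Nat.le_add_floor_of_le_add {α : Type*} [Semiring α] [LinearOrder α]
    [IsStrictOrderedRing α] [FloorSemiring α] {a b : ℕ} {r : α} (h : (a : α) ≤ b + r) :
    a ≤ b + ⌊r⌋₊ := by
  by_contra! hlt
  have hlt' : (b : α) + (⌊r⌋₊ + 1) ≤ a := by rw [← add_assoc]; exact_mod_cast hlt
  exact h.not_gt ((add_lt_add_right (Nat.lt_floor_add_one r) _).trans_le hlt')

theorem two_mul_card_multCount_band_le_four_pow {N : ℕ} (hN : 16 ≤ N) :
    2 * #{Z : Fin N → Fin 4 | multCount N Z 0 ≤ multCount N Z 1 + ⌊√N / 8⌋₊ ∧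
      multCount N Z 1 ≤ multCount N Z 0 + ⌊√N / 8⌋₊} ≤ 4 ^ N := by
  set t := ⌊√N / 8⌋₊
  have ht : (t : ℝ) ≤ √N / 8 := Nat.floor_le (by positivity)
  have hsqrt : (4 : ℝ) ≤ √N := Real.le_sqrt_of_sq_le (by norm_num; exact_mod_cast hN)
  have hk : (4 * t + 2) ^ 2 ≤ 2 * N + 1 := by
    have : ((4 * t + 2 : ℕ) : ℝ) ^ 2 ≤ 2 * N + 1 := by
      have hle : ((4 * t + 2 : ℕ) : ℝ) ≤ √N := by push_cast; linarith
      nlinarith [Real.sq_sqrt (Nat.cast_nonneg (α := ℝ) N)]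
    exact_mod_cast this
  calc _ ≤ 2 * ((2 * t + 1) * N.centralBinom) := by gcongr; exact card_multCount_band_le N t
    _ = (4 * t + 2) * N.centralBinom := by ring
    _ ≤ 4 ^ N := Nat.mul_centralBinom_le_four_pow hk

theorem four_pow_le_four_mul_card_multCount_add_sqrt_lt {N : ℕ} (hN : 16 ≤ N) :
    4 ^ N ≤ 4 * #{Z : Fin N → Fin 4 | (multCount N Z 0 : ℝ) + √N / 8 < multCount N Z 1} := by
  set t := ⌊√N / 8⌋₊
  set below : Finset (Fin N → Fin 4) :=
    {Z | (multCount N Z 0 : ℝ) + √N / 8 < multCount N Z 1}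
  set above : Finset (Fin N → Fin 4) :=
    {Z | (multCount N Z 1 : ℝ) + √N / 8 < multCount N Z 0}
  set band : Finset (Fin N → Fin 4) :=
    {Z | multCount N Z 0 ≤ multCount N Z 1 + t ∧ multCount N Z 1 ≤ multCount N Z 0 + t}
  have hcover : (univ : Finset (Fin N → Fin 4)) ⊆ below ∪ above ∪ band := by
    intro Z _
    simp only [below, above, band, mem_union, mem_filter, mem_univ, true_and]
    rw [or_iff_not_imp_left]
    intro h
    push Not at h
    exact ⟨Nat.le_add_floor_of_le_add (by linarith [h.2]),
      Nat.le_add_floor_of_le_add (by linarith [h.1])⟩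
  have hsymm : #above = #below := card_multCount_add_lt_comm N _
  have hband : 2 * #band ≤ 4 ^ N := two_mul_card_multCount_band_le_four_pow hN
  have hcard := card_le_card hcover
  rw [card_univ, Fintype.card_fun, Fintype.card_fin, Fintype.card_fin] at hcard
  have := card_union_le (below ∪ above) band
  have := card_union_le below above
  omega

/-- multinomial anti-concentration. For `N` i.i.d. uniform samples
from 4 values with counts `X₁,…,X₄`, there exist constants `ε₁, c > 0` such
that for all sufficiently large `N`, with probability at least `ε₁`,
`X₁ < max{X₂, X₃, X₄} − c√N`. -/
theorem stmt9 :
    ∃ ε₁ c : ℝ, 0 < ε₁ ∧ 0 < c ∧ ∃ N₀ : ℕ, ∀ N : ℕ, N₀ ≤ N →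
      ENNReal.ofReal ε₁ ≤
        (PMF.uniformOfFintype (Fin N → Fin 4)).toOuterMeasure
          {Z | (multCount N Z 0 : ℝ) + c * Real.sqrt N <
                max (multCount N Z 1 : ℝ) (max (multCount N Z 2 : ℝ) (multCount N Z 3 : ℝ))} := by
  refine ⟨1 / 4, 1 / 8, by norm_num, by norm_num, 16, fun N hN => ?_⟩
  rw [PMF.toOuterMeasure_uniformOfFintype_apply, Fintype.card_subtype, Fintype.card_fun,
    Fintype.card_fin, Fintype.card_fin]
  have hsub : #{Z : Fin N → Fin 4 | (multCount N Z 0 : ℝ) + √N / 8 < multCount N Z 1} ≤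
      #{Z : Fin N → Fin 4 | (multCount N Z 0 : ℝ) + 1 / 8 * √N <
        max (multCount N Z 1 : ℝ) (max (multCount N Z 2 : ℝ) (multCount N Z 3 : ℝ))} :=
    card_le_card <| monotone_filter_right _ fun Z _ hZ => by
      linarith [le_max_left (multCount N Z 1 : ℝ) (max (multCount N Z 2 : ℝ) (multCount N Z 3))]
  have hcount := (four_pow_le_four_mul_card_multCount_add_sqrt_lt hN).trans
    (Nat.mul_le_mul_left 4 hsub)
  rw [ENNReal.le_div_iff_mul_le (by simp) (by simp), ENNReal.ofReal_div_of_pos (by norm_num),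
    ENNReal.ofReal_one, ENNReal.ofReal_ofNat, one_div, ENNReal.inv_mul_le_iff (by simp) (by simp)]
  exact_mod_cast hcount
end

section
/- Consider a sequence of m insertions into 4 bins where each ball receives a uniformly random pair of distinct bins and any (possibly adaptive, sequential) strategy places it in one of its two bins. With probability at least 1/poly(m), at the end some bin contains at least m/4 + Ω(log m) balls. -/
/-!
Write `m = n + k` with `k = ⌊log₂ m⌋`. Whatever the first `n` pairs are, one of the pairs
`{0, 1}`, `{2, 3}` then holds at least `n / 2` balls. If each of the last `k` balls receives
the heavy pair of the first `n` pairs, that pair ends with at least `n / 2 + k` balls, so one of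
its bins has at least `m / 4 + k / 4` of them. Since the heavy pair is a function of the prefix,
this event has probability exactly `12⁻ᵏ ≥ m⁻⁴`.
-/

/-- A uniformly random pair of distinct bins among 4 bins. -/
def DistinctPair : Type := {p : Fin 4 × Fin 4 // p.1 ≠ p.2}

instance : Nonempty DistinctPair := ⟨⟨(0, 1), by decide⟩⟩

instance : Fintype DistinctPair := by unfold DistinctPair; infer_instance

/-- Running an arbitrary adaptive sequential 2-choice strategy: the strategy
sees the history of pairs so far (including the current ball's pair) and
chooses the first (`true`) or the second (`false`) bin of the current pair;
the result is the final load vector. -/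
def run13 (strat : List (Fin 4 × Fin 4) → Bool) (hs : List (Fin 4 × Fin 4)) :
    Fin 4 → ℕ :=
  (hs.foldl
    (fun (acc : List (Fin 4 × Fin 4) × (Fin 4 → ℕ)) p =>
      let hist := acc.1 ++ [p]
      let b := if strat hist then p.1 else p.2
      (hist, Function.update acc.2 b (acc.2 b + 1)))
    (([] : List (Fin 4 × Fin 4)), fun _ => 0)).2

open scoped ENNReal

section Allocation

variable {α : Type*} [DecidableEq α] (strat : List (α × α) → Bool)

def allocStep (acc : List (α × α) × (α → ℕ)) (p : α × α) : List (α × α) × (α → ℕ) :=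
  let hist := acc.1 ++ [p]
  let b := if strat hist then p.1 else p.2
  (hist, Function.update acc.2 b (acc.2 b + 1))

theorem fst_foldl_allocStep (hs : List (α × α)) (acc : List (α × α) × (α → ℕ)) :
    (hs.foldl (allocStep strat) acc).1 = acc.1 ++ hs := by
  induction hs generalizing acc with
  | nil => simp
  | cons p t ih => simp [ih, allocStep]

theorem sum_snd_foldl_allocStep [Fintype α] (hs : List (α × α))
    (acc : List (α × α) × (α → ℕ)) :
    ∑ b, (hs.foldl (allocStep strat) acc).2 b = ∑ b, acc.2 b + hs.length := by
  induction hs generalizing acc with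
  | nil => simp
  | cons p t ih =>
    rw [List.foldl_cons, ih, allocStep, Finset.sum_update_of_mem (Finset.mem_univ _),
      ← Finset.add_sum_erase _ _ (Finset.mem_univ _), Finset.sdiff_singleton_eq_erase]
    simp only [List.length_cons]
    ring

theorem foldl_allocStep_replicate {a b : α} (hab : a ≠ b) (k : ℕ)
    (acc : List (α × α) × (α → ℕ)) :
    ((List.replicate k (a, b)).foldl (allocStep strat) acc).2 a +
        ((List.replicate k (a, b)).foldl (allocStep strat) acc).2 b =
      acc.2 a + acc.2 b + k := by
  induction k generalizing acc with
  | zero => simp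
  | succ k ih =>
    rw [List.replicate_succ, List.foldl_cons, ih, allocStep]
    by_cases h : strat (acc.1 ++ [(a, b)]) <;>
      simp [h, hab, hab.symm] <;> omega

end Allocation

theorem toOuterMeasure_uniformOfFintype_range_append {α : Type*} [Fintype α] [Nonempty α]
    {n k : ℕ} (f : (Fin n → α) → Fin k → α) :
    (PMF.uniformOfFintype (Fin (n + k) → α)).toOuterMeasure
        (Set.range fun g => Fin.append g (f g)) = ((Fintype.card α : ℝ≥0∞) ^ k)⁻¹ := by
  classical
  have hinj : Function.Injective fun g => Fin.append g (f g) := fun g g' h => by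
    funext i
    simpa using congrFun h (Fin.castAdd k i)
  rw [PMF.toOuterMeasure_uniformOfFintype_apply, Set.card_range_of_injective hinj]
  simp only [Fintype.card_fun, Fintype.card_fin, Nat.cast_pow, pow_add]
  have h0 : (Fintype.card α : ℝ≥0∞) ^ n ≠ 0 := by simp
  have htop : (Fintype.card α : ℝ≥0∞) ^ n ≠ ⊤ := by simp
  push_cast
  rw [ENNReal.div_eq_inv_mul, ENNReal.mul_inv (.inl h0) (.inl htop), mul_right_comm,
    ENNReal.inv_mul_cancel h0 htop, one_mul]

theorem log_le_two_mul_natLog {m : ℕ} (hm : 2 ≤ m) : Real.log m ≤ 2 * Nat.log 2 m := by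
  have hk : 1 ≤ Nat.log 2 m := Nat.le_log_of_pow_le (by norm_num) (by simpa using hm)
  have hlt : (m : ℝ) < 2 ^ (Nat.log 2 m + 1) := by
    exact_mod_cast Nat.lt_pow_succ_log_self one_lt_two m
  calc Real.log m ≤ Real.log (2 ^ (Nat.log 2 m + 1)) := Real.log_le_log (by positivity) hlt.le
    _ = (Nat.log 2 m + 1) * Real.log 2 := by rw [Real.log_pow]; push_cast; ring
    _ ≤ (Nat.log 2 m + 1) * 1 := by gcongr; exact Real.log_two_lt_d9.le.trans (by norm_num)
    _ ≤ 2 * Nat.log 2 m := by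
      have : (1 : ℝ) ≤ Nat.log 2 m := by exact_mod_cast hk
      linarith

theorem twelve_pow_natLog_le {m : ℕ} (hm : m ≠ 0) : 12 ^ Nat.log 2 m ≤ m ^ 4 :=
  calc 12 ^ Nat.log 2 m ≤ (2 ^ 4) ^ Nat.log 2 m := Nat.pow_le_pow_left (by norm_num) _
    _ = (2 ^ Nat.log 2 m) ^ 4 := by rw [← pow_mul, ← pow_mul, mul_comm]
    _ ≤ m ^ 4 := Nat.pow_le_pow_left (Nat.pow_log_le_self 2 hm) 4

theorem ofReal_rpow_neg_four_le_inv_twelve_pow_natLog {m : ℕ} (hm : m ≠ 0) :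
    ENNReal.ofReal ((m : ℝ) ^ (-4 : ℝ)) ≤ ((12 : ℝ≥0∞) ^ Nat.log 2 m)⁻¹ := by
  have hm0 : (0 : ℝ) < m := by exact_mod_cast Nat.pos_of_ne_zero hm
  rw [Real.rpow_neg hm0.le, ENNReal.ofReal_inv_of_pos (by positivity),
    show (4 : ℝ) = (4 : ℕ) from rfl, Real.rpow_natCast, ENNReal.ofReal_pow hm0.le,
    ENNReal.ofReal_natCast]
  exact ENNReal.inv_le_inv.2 (by exact_mod_cast twelve_pow_natLog_le hm)

section Run

variable (strat : List (Fin 4 × Fin 4) → Bool)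

theorem run13_eq_foldl (hs : List (Fin 4 × Fin 4)) :
    run13 strat hs = (hs.foldl (allocStep strat) ([], fun _ => 0)).2 := rfl

theorem run13_append (hs ts : List (Fin 4 × Fin 4)) :
    run13 strat (hs ++ ts) = (ts.foldl (allocStep strat) (hs, run13 strat hs)).2 := by
  rw [run13_eq_foldl, List.foldl_append]
  congr
  exact Prod.ext (by simp [fst_foldl_allocStep]) rfl

theorem sum_run13 (hs : List (Fin 4 × Fin 4)) : ∑ b, run13 strat hs b = hs.length := by
  simp [run13_eq_foldl, sum_snd_foldl_allocStep]

theorem run13_append_replicate_add {a b : Fin 4} (hab : a ≠ b) (hs : List (Fin 4 × Fin 4))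
    (k : ℕ) :
    run13 strat (hs ++ List.replicate k (a, b)) a +
        run13 strat (hs ++ List.replicate k (a, b)) b =
      run13 strat hs a + run13 strat hs b + k := by
  rw [run13_append, foldl_allocStep_replicate strat hab]

theorem exists_distinctPair_length_le_two_mul_run13 (hs : List (Fin 4 × Fin 4)) :
    ∃ p : DistinctPair, hs.length ≤ 2 * (run13 strat hs p.1.1 + run13 strat hs p.1.2) := by
  have htotal := sum_run13 strat hs
  rw [Fin.sum_univ_four] at htotal
  by_cases h : hs.length ≤ 2 * (run13 strat hs 0 + run13 strat hs 1)
  · exact ⟨⟨(0, 1), by decide⟩, h⟩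
  · exact ⟨⟨(2, 3), by decide⟩, by dsimp only; omega⟩

theorem exists_length_add_two_mul_le_four_mul_run13 {a b : Fin 4} (hab : a ≠ b)
    (hs : List (Fin 4 × Fin 4)) (hheavy : hs.length ≤ 2 * (run13 strat hs a + run13 strat hs b))
    (k : ℕ) : ∃ c, hs.length + 2 * k ≤ 4 * run13 strat (hs ++ List.replicate k (a, b)) c := by
  have hsum := run13_append_replicate_add strat hab hs k
  by_cases h : run13 strat (hs ++ List.replicate k (a, b)) a ≤
      run13 strat (hs ++ List.replicate k (a, b)) b
  · exact ⟨b, by omega⟩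
  · exact ⟨a, by omega⟩

end Run

theorem card_distinctPair : Fintype.card DistinctPair = 12 := by decide

theorem inv_twelve_pow_le_toOuterMeasure_exists_load_ge
    (strat : List (Fin 4 × Fin 4) → Bool) (n k : ℕ) :
    ((12 : ℝ≥0∞) ^ k)⁻¹ ≤ (PMF.uniformOfFintype (Fin (n + k) → DistinctPair)).toOuterMeasure
      {h | ∃ c, n + 2 * k ≤ 4 * run13 strat (List.ofFn fun i => (h i).val) c} := by
  choose heavy hheavy using fun g : Fin n → DistinctPair =>
    exists_distinctPair_length_le_two_mul_run13 strat (List.ofFn fun i => (g i).val)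
  calc ((12 : ℝ≥0∞) ^ k)⁻¹
      = (PMF.uniformOfFintype (Fin (n + k) → DistinctPair)).toOuterMeasure
          (Set.range fun g => Fin.append g fun _ => heavy g) := by
        rw [toOuterMeasure_uniformOfFintype_range_append, card_distinctPair, Nat.cast_ofNat]
    _ ≤ _ := MeasureTheory.measure_mono ?_
  rintro _ ⟨g, rfl⟩
  have hload := exists_length_add_two_mul_le_four_mul_run13 strat (heavy g).2 _ (hheavy g) k
  have hlist : (List.ofFn fun i => (Fin.append g (fun _ : Fin k => heavy g) i).val) =
      (List.ofFn fun i => (g i).val) ++ List.replicate k (heavy g).val := by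
    simp [List.ofFn_add, Fin.append_left', Fin.append_right, List.ofFn_const]
  simpa [hlist] using hload

/-- for any (possibly adaptive, sequential) 2-choice strategy on
4 bins, after `m` insertions with uniformly random distinct pairs, with
probability at least `1/poly(m)` some bin contains at least `m/4 + Ω(log m)`
balls. -/
theorem stmt13 :
    ∃ c₁ c₂ : ℝ, 0 < c₁ ∧ 0 < c₂ ∧ ∃ m₀ : ℕ, ∀ m : ℕ, m₀ ≤ m →
    ∀ strat : List (Fin 4 × Fin 4) → Bool,
      ENNReal.ofReal ((m : ℝ) ^ (-c₂)) ≤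
        (PMF.uniformOfFintype (Fin m → DistinctPair)).toOuterMeasure
          {h | ∃ b : Fin 4,
            (m : ℝ) / 4 + c₁ * Real.log m ≤
              (run13 strat (List.ofFn (fun i => (h i).val)) b : ℝ)} := by
  refine ⟨1 / 8, 4, by norm_num, by norm_num, 2, fun m hm strat => ?_⟩
  set k := Nat.log 2 m
  have hkm : k ≤ m := Nat.log_le_self 2 m
  have hprob := inv_twelve_pow_le_toOuterMeasure_exists_load_ge strat (m - k) k
  rw [Nat.sub_add_cancel hkm] at hprob
  refine (ofReal_rpow_neg_four_le_inv_twelve_pow_natLog (by omega)).trans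
    (hprob.trans (MeasureTheory.measure_mono ?_))
  rintro h ⟨c, hc⟩
  refine ⟨c, ?_⟩
  have hlog := log_le_two_mul_natLog hm
  have hload : (m : ℝ) + k ≤ 4 * run13 strat (List.ofFn fun i => (h i).val) c := by
    exact_mod_cast (by omega : m + k ≤ 4 * run13 strat (List.ofFn fun i => (h i).val) c)
  linarith
end

section
/- Consider a random walk (Dₜ) on the integers with |D₀| ≤ k, where at each step, if Dₜ ≠ 0 then Dₜ₊₁ − Dₜ ∈ {−1, 0, +1} with Pr[|Dₜ₊₁| = |Dₜ| − 1] ≥ 1/6 and Pr[|Dₜ₊₁| = |Dₜ| + 1] ≤ Pr[|Dₜ₊₁| = |Dₜ| − 1] − δ for a constant δ > 0 (and arbitrary behavior when Dₜ = 0 with |increment| ≤ 1). Then with probability 1 − 1/poly(k), for a sufficiently large constant c, the walk satisfies |D_{ck}| ≤ O(log k). -/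
open MeasureTheory

/-!
Put `X = |D|` and fix `l = min (δ / 4) 1`. A step of `X` multiplies `exp (l X)` by `exp (-l)`,
`1` or `exp l`, so away from `0` the drift gives
`E[exp (l X_{t+1}) | 𝒢 t] ≤ (1 - l²) exp (l X_t)`, and at `0` the conditional expectation is at most
`exp l`. Iterating, `E exp (l X_T) ≤ (1 - l²)^T exp (l k) + exp l / l²`, which is at most `k` once
`T ≥ k / l` and `k` is large. A Chernoff bound at level `C log k` with `l C ≥ γ + 1` then bounds
the probability that `X_T > C log k` by `k ^ (-γ)`.
-/

open ProbabilityTheory Real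

theorem one_add_drift_le_one_sub_sq {l δ p q : ℝ} (hl : 0 ≤ l) (hlδ : 4 * l ≤ δ) (hp : p ≤ 1)
    (hqp : q ≤ p - δ) :
    1 + (exp (-l) - 1) * p + (exp l - 1) * q ≤ 1 - l ^ 2 := by
  have hexp := add_one_le_exp l
  have hexp_neg := add_one_le_exp (-l)
  have hcosh : exp l + exp (-l) - 2 ≤ δ * (exp l - 1) - l ^ 2 := by
    have hprod : exp l * exp (-l) = 1 := by rw [← exp_add]; simp
    nlinarith [mul_le_mul_of_nonneg_left hexp_neg (exp_pos l).le,
      mul_le_mul_of_nonneg_left hexp (exp_pos (-l)).le, sq_nonneg (exp l - 1 - l)]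
  nlinarith [mul_le_mul_of_nonneg_left hqp (by linarith : 0 ≤ exp l - 1),
    mul_le_mul_of_nonneg_left hp (by linarith : 0 ≤ exp l + exp (-l) - 2)]

theorem one_add_drift_le_exp {l p q : ℝ} (hl : 0 ≤ l) (hp : 0 ≤ p) (hq : q ≤ 1) :
    1 + (exp (-l) - 1) * p + (exp l - 1) * q ≤ exp l := by
  have hexp_neg : exp (-l) ≤ 1 := exp_le_one_iff.mpr (by linarith)
  have hexp : 1 ≤ exp l := one_le_exp hl
  nlinarith [mul_le_mul_of_nonneg_left hq (by linarith : 0 ≤ exp l - 1)]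

theorem le_pow_mul_add_of_le_mul_add {a : ℕ → ℝ} {ρ b B : ℝ} (hρ : 0 ≤ ρ) (hB₀ : 0 ≤ B)
    (hB : ρ * B + b = B) (h : ∀ t, a (t + 1) ≤ ρ * a t + b) (T : ℕ) :
    a T ≤ ρ ^ T * a 0 + B := by
  induction T with
  | zero => simpa using hB₀
  | succ T ih =>
    calc a (T + 1) ≤ ρ * (ρ ^ T * a 0 + B) + b := (h T).trans (by gcongr)
      _ = ρ ^ (T + 1) * a 0 + (ρ * B + b) := by ring
      _ = ρ ^ (T + 1) * a 0 + B := by rw [hB]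

theorem one_sub_sq_pow_mul_exp_le_one {l : ℝ} (hl₀ : 0 < l) (hl₁ : l ≤ 1) (k : ℕ) :
    (1 - l ^ 2) ^ (⌈1 / l⌉₊ * k) * exp (l * k) ≤ 1 := by
  have hceil : 1 ≤ l * ⌈1 / l⌉₊ := by
    have := Nat.le_ceil (1 / l)
    rw [div_le_iff₀ hl₀] at this
    linarith
  have hρ : 0 ≤ 1 - l ^ 2 := by nlinarith
  calc (1 - l ^ 2) ^ (⌈1 / l⌉₊ * k) * exp (l * k)
      ≤ exp (-l ^ 2) ^ (⌈1 / l⌉₊ * k) * exp (l * k) := by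
        gcongr
        linarith [add_one_le_exp (-l ^ 2)]
    _ = exp (l * k * (1 - l * ⌈1 / l⌉₊)) := by
        rw [← exp_nat_mul, ← exp_add]
        push_cast
        ring_nf
    _ ≤ 1 := exp_le_one_iff.mpr (mul_nonpos_of_nonneg_of_nonpos (by positivity) (by linarith))

theorem exp_neg_mul_ceil_mul_log_mul_le {l γ K x : ℝ} (hl : 0 < l) (hx : 1 ≤ x) (hK : K ≤ x) :
    exp (-l * (⌈(γ + 1) / l⌉₊ * log x)) * K ≤ x ^ (-γ) := by
  have hceil : γ + 1 ≤ l * ⌈(γ + 1) / l⌉₊ := by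
    have := Nat.le_ceil ((γ + 1) / l)
    rw [div_le_iff₀ hl] at this
    linarith
  have hlog : 0 ≤ log x := log_nonneg hx
  calc exp (-l * (⌈(γ + 1) / l⌉₊ * log x)) * K ≤ exp (-l * (⌈(γ + 1) / l⌉₊ * log x)) * x := by
        gcongr
    _ = exp (-l * (⌈(γ + 1) / l⌉₊ * log x) + log x) := by
        rw [exp_add, exp_log (by linarith)]
    _ ≤ exp (log x * -γ) := exp_le_exp.mpr (by nlinarith)
    _ = x ^ (-γ) := (rpow_def_of_pos (by linarith) _).symm

theorem ae_condExp_indicator_one_mem_Icc {Ω : Type*} {m m₀ : MeasurableSpace Ω} {μ : Measure Ω}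
    [IsFiniteMeasure μ] (hm : m ≤ m₀) {s : Set Ω} (hs : MeasurableSet s) :
    ∀ᵐ ω ∂μ, μ[s.indicator (fun _ => (1 : ℝ)) | m] ω ∈ Set.Icc 0 1 := by
  have h01 : ∀ ω, s.indicator (fun _ => (1 : ℝ)) ω ∈ Set.Icc 0 1 := by
    intro ω
    by_cases h : ω ∈ s <;> simp [h]
  have hle := condExp_mono (m := m) ((integrable_const (1 : ℝ)).indicator hs)
    (integrable_const (1 : ℝ)) (ae_of_all μ fun ω => (h01 ω).2)
  rw [condExp_const hm] at hle
  filter_upwards [condExp_nonneg (m := m) (ae_of_all μ fun ω => (h01 ω).1), hle] with ω h₀ h₁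
  exact ⟨h₀, h₁⟩

theorem ofReal_one_sub_exp_mul_mgf_le_measure {Ω : Type*} {mΩ : MeasurableSpace Ω}
    {μ : Measure Ω} [IsProbabilityMeasure μ] {Y : Ω → ℝ} {l : ℝ} (hY : Measurable Y) (hl : 0 ≤ l)
    (hint : Integrable (fun ω => exp (l * Y ω)) μ) (a : ℝ) :
    ENNReal.ofReal (1 - exp (-l * a) * mgf Y μ l) ≤ μ {ω | Y ω ≤ a} := by
  have hcompl : {ω | Y ω ≤ a}ᶜ ⊆ {ω | a ≤ Y ω} := fun ω (hω : ¬Y ω ≤ a) => (not_le.mp hω).le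
  have htail : μ.real {ω | Y ω ≤ a}ᶜ ≤ exp (-l * a) * mgf Y μ l :=
    (measureReal_mono hcompl).trans (measure_ge_le_exp_mul_mgf a hl hint)
  rw [probReal_compl_eq_one_sub (measurableSet_le hY measurable_const)] at htail
  rw [← ofReal_measureReal]
  exact ENNReal.ofReal_le_ofReal (by linarith)

section IntegerProcess

variable {Ω : Type*} {mΩ : MeasurableSpace Ω} {μ : Measure Ω} {𝒢 : Filtration ℕ mΩ}
  {X : ℕ → Ω → ℤ} {t : ℕ} {l δ k : ℝ}

def downStepSet (X : ℕ → Ω → ℤ) (t : ℕ) : Set Ω := {ω | X (t + 1) ω = X t ω - 1}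

def upStepSet (X : ℕ → Ω → ℤ) (t : ℕ) : Set Ω := {ω | X (t + 1) ω = X t ω + 1}

theorem measurableSet_downStepSet (hX : Adapted 𝒢 X) : MeasurableSet (downStepSet X t) :=
  measurableSet_eq_fun ((hX _).mono (𝒢.le _) le_rfl) (((hX t).mono (𝒢.le t) le_rfl).sub_const 1)

theorem measurableSet_upStepSet (hX : Adapted 𝒢 X) : MeasurableSet (upStepSet X t) :=
  measurableSet_eq_fun ((hX _).mono (𝒢.le _) le_rfl) (((hX t).mono (𝒢.le t) le_rfl).add_const 1)

theorem stronglyMeasurable_exp_mul (hX : Adapted 𝒢 X) (l : ℝ) (t : ℕ) :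
    StronglyMeasurable[𝒢 t] fun ω => exp (l * X t ω) :=
  (measurable_exp.comp ((Measurable.of_discrete.comp (hX t)).const_mul l)).stronglyMeasurable

theorem le_add_of_abs_succ_sub_le_one (hinc : ∀ t ω, |X (t + 1) ω - X t ω| ≤ 1) (t : ℕ)
    (ω : Ω) : X t ω ≤ X 0 ω + t := by
  induction t with
  | zero => simp
  | succ t ih =>
    have := (abs_le.mp (hinc t ω)).2
    push_cast
    omega

theorem integrable_exp_mul [IsFiniteMeasure μ] (hl : 0 ≤ l) (hX : Adapted 𝒢 X)
    (h0 : ∀ ω, X 0 ω ≤ k) (hinc : ∀ t ω, |X (t + 1) ω - X t ω| ≤ 1) (t : ℕ) :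
    Integrable (fun ω => exp (l * X t ω)) μ := by
  refine Integrable.of_bound
    ((stronglyMeasurable_exp_mul hX l t).mono (𝒢.le t)).aestronglyMeasurable
    (exp (l * (k + t))) (ae_of_all μ fun ω => ?_)
  have hle : (X t ω : ℝ) ≤ k + t := by
    have : (X t ω : ℝ) ≤ X 0 ω + t := by exact_mod_cast le_add_of_abs_succ_sub_le_one hinc t ω
    linarith [h0 ω]
  rw [Real.norm_of_nonneg (exp_pos _).le]
  exact exp_le_exp.mpr (mul_le_mul_of_nonneg_left hle hl)

theorem exp_mul_succ_eq (l : ℝ) (hinc : ∀ ω, |X (t + 1) ω - X t ω| ≤ 1) :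
    (fun ω => exp (l * X (t + 1) ω)) = (fun ω => exp (l * X t ω)) *
      (1 + (exp (-l) - 1) • (downStepSet X t).indicator (fun _ => 1)
        + (exp l - 1) • (upStepSet X t).indicator (fun _ => 1)) := by
  funext ω
  have h := abs_le.mp (hinc ω)
  obtain h | h | h :
      X (t + 1) ω = X t ω - 1 ∨ X (t + 1) ω = X t ω ∨ X (t + 1) ω = X t ω + 1 := by
    omega
  all_goals
    simp only [downStepSet, upStepSet, Set.indicator, Set.mem_ofPred_eq, h, Pi.mul_apply,
      Pi.add_apply, Pi.smul_apply, Pi.one_apply, smul_eq_mul]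
    split_ifs <;> first
      | omega
      | (push_cast
         simp only [mul_add, mul_sub, mul_one, mul_zero, add_zero, exp_add, exp_sub, exp_neg])
    <;> ring

theorem condExp_exp_mul_succ_ae_eq [IsFiniteMeasure μ] (l : ℝ) (hX : Adapted 𝒢 X)
    (hinc : ∀ ω, |X (t + 1) ω - X t ω| ≤ 1)
    (hint : Integrable (fun ω => exp (l * X (t + 1) ω)) μ) :
    μ[fun ω => exp (l * X (t + 1) ω) | 𝒢 t] =ᵐ[μ] (fun ω => exp (l * X t ω)) *
      (1 + (exp (-l) - 1) • μ[(downStepSet X t).indicator (fun _ => 1) | 𝒢 t]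
        + (exp l - 1) • μ[(upStepSet X t).indicator (fun _ => 1) | 𝒢 t]) := by
  have hone : Integrable (1 : Ω → ℝ) μ := integrable_const 1
  have hdown : Integrable ((exp (-l) - 1) • (downStepSet X t).indicator fun _ => (1 : ℝ)) μ :=
    ((integrable_const 1).indicator (measurableSet_downStepSet hX)).smul _
  have hup : Integrable ((exp l - 1) • (upStepSet X t).indicator fun _ => (1 : ℝ)) μ :=
    ((integrable_const 1).indicator (measurableSet_upStepSet hX)).smul _
  have hfactor : μ[1 + (exp (-l) - 1) • (downStepSet X t).indicator (fun _ => 1)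
        + (exp l - 1) • (upStepSet X t).indicator (fun _ => (1 : ℝ)) | 𝒢 t] =ᵐ[μ]
      1 + (exp (-l) - 1) • μ[(downStepSet X t).indicator (fun _ => 1) | 𝒢 t]
        + (exp l - 1) • μ[(upStepSet X t).indicator (fun _ => 1) | 𝒢 t] := by
    filter_upwards [condExp_add (hone.add hdown) hup (𝒢 t), condExp_add hone hdown (𝒢 t),
      condExp_smul (exp (-l) - 1) ((downStepSet X t).indicator fun _ => (1 : ℝ)) (𝒢 t),
      condExp_smul (exp l - 1) ((upStepSet X t).indicator fun _ => (1 : ℝ)) (𝒢 t)]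
      with ω h₁ h₂ h₃ h₄
    simp only [Pi.add_apply] at h₁ h₂ ⊢
    have h₀ : μ[(1 : Ω → ℝ) | 𝒢 t] = 1 := condExp_const (𝒢.le t) 1
    rw [h₁, h₂, h₃, h₄, h₀]
  rw [exp_mul_succ_eq l hinc] at hint ⊢
  filter_upwards [condExp_mul_of_stronglyMeasurable_left (stronglyMeasurable_exp_mul hX l t) hint
    ((hone.add hdown).add hup), hfactor] with ω h₁ h₂
  rw [h₁, Pi.mul_apply, h₂, Pi.mul_apply]

theorem condExp_exp_mul_succ_le [IsFiniteMeasure μ] (hl₀ : 0 ≤ l) (hl₁ : l ≤ 1)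
    (hlδ : 4 * l ≤ δ) (hX : Adapted 𝒢 X) (hinc : ∀ ω, |X (t + 1) ω - X t ω| ≤ 1)
    (hint : Integrable (fun ω => exp (l * X (t + 1) ω)) μ)
    (hdrift : ∀ᵐ ω ∂μ, X t ω ≠ 0 →
      μ[(upStepSet X t).indicator (fun _ => 1) | 𝒢 t] ω ≤
        μ[(downStepSet X t).indicator (fun _ => 1) | 𝒢 t] ω - δ) :
    ∀ᵐ ω ∂μ, μ[fun ω => exp (l * X (t + 1) ω) | 𝒢 t] ω ≤
      (1 - l ^ 2) * exp (l * X t ω) + exp l := by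
  filter_upwards [condExp_exp_mul_succ_ae_eq l hX hinc hint, hdrift,
    ae_condExp_indicator_one_mem_Icc (𝒢.le t) (measurableSet_downStepSet (t := t) hX),
    ae_condExp_indicator_one_mem_Icc (𝒢.le t) (measurableSet_upStepSet (t := t) hX)]
    with ω hω hdriftω ⟨hp₀, hp₁⟩ hq
  rw [hω]
  simp only [Pi.mul_apply, Pi.add_apply, Pi.smul_apply, Pi.one_apply, smul_eq_mul]
  by_cases h0 : X t ω = 0
  · rw [h0, Int.cast_zero, mul_zero, exp_zero, one_mul]
    nlinarith [one_add_drift_le_exp hl₀ hp₀ hq.2]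
  · calc _ ≤ exp (l * X t ω) * (1 - l ^ 2) :=
          mul_le_mul_of_nonneg_left (one_add_drift_le_one_sub_sq hl₀ hlδ hp₁ (hdriftω h0))
            (exp_pos _).le
      _ ≤ _ := by linarith [exp_pos l]

theorem integral_exp_mul_succ_le [IsProbabilityMeasure μ] (hl₀ : 0 ≤ l) (hl₁ : l ≤ 1)
    (hlδ : 4 * l ≤ δ) (hX : Adapted 𝒢 X) (hinc : ∀ ω, |X (t + 1) ω - X t ω| ≤ 1)
    (hint : Integrable (fun ω => exp (l * X t ω)) μ)
    (hint_succ : Integrable (fun ω => exp (l * X (t + 1) ω)) μ)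
    (hdrift : ∀ᵐ ω ∂μ, X t ω ≠ 0 →
      μ[(upStepSet X t).indicator (fun _ => 1) | 𝒢 t] ω ≤
        μ[(downStepSet X t).indicator (fun _ => 1) | 𝒢 t] ω - δ) :
    ∫ ω, exp (l * X (t + 1) ω) ∂μ ≤ (1 - l ^ 2) * ∫ ω, exp (l * X t ω) ∂μ + exp l :=
  calc ∫ ω, exp (l * X (t + 1) ω) ∂μ = ∫ ω, μ[fun ω => exp (l * X (t + 1) ω) | 𝒢 t] ω ∂μ :=
        (integral_condExp (𝒢.le t)).symm
    _ ≤ ∫ ω, ((1 - l ^ 2) * exp (l * X t ω) + exp l) ∂μ :=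
        integral_mono_ae integrable_condExp ((hint.const_mul _).add (integrable_const _))
          (condExp_exp_mul_succ_le hl₀ hl₁ hlδ hX hinc hint_succ hdrift)
    _ = (1 - l ^ 2) * ∫ ω, exp (l * X t ω) ∂μ + exp l := by
        rw [integral_add (hint.const_mul _) (integrable_const _), integral_const_mul,
          integral_const, probReal_univ, one_smul]

theorem integral_exp_mul_le [IsProbabilityMeasure μ] (hl₀ : 0 < l) (hl₁ : l ≤ 1)
    (hlδ : 4 * l ≤ δ) (hX : Adapted 𝒢 X) (h0 : ∀ ω, X 0 ω ≤ k)
    (hinc : ∀ t ω, |X (t + 1) ω - X t ω| ≤ 1)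
    (hdrift : ∀ t, ∀ᵐ ω ∂μ, X t ω ≠ 0 →
      μ[(upStepSet X t).indicator (fun _ => 1) | 𝒢 t] ω ≤
        μ[(downStepSet X t).indicator (fun _ => 1) | 𝒢 t] ω - δ) (T : ℕ) :
    ∫ ω, exp (l * X T ω) ∂μ ≤ (1 - l ^ 2) ^ T * exp (l * k) + exp l / l ^ 2 := by
  have hint := integrable_exp_mul (μ := μ) hl₀.le hX h0 hinc
  have hstart : ∫ ω, exp (l * X 0 ω) ∂μ ≤ exp (l * k) :=
    calc ∫ ω, exp (l * X 0 ω) ∂μ ≤ ∫ _, exp (l * k) ∂μ :=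
          integral_mono (hint 0) (integrable_const _) fun ω =>
            exp_le_exp.mpr (mul_le_mul_of_nonneg_left (h0 ω) hl₀.le)
      _ = exp (l * k) := by simp
  have hstep t := integral_exp_mul_succ_le hl₀.le hl₁ hlδ hX (hinc t) (hint t) (hint (t + 1))
    (hdrift t)
  have hρ : 0 ≤ 1 - l ^ 2 := by nlinarith
  have hfixed : (1 - l ^ 2) * (exp l / l ^ 2) + exp l = exp l / l ^ 2 := by
    field_simp
    ring
  calc ∫ ω, exp (l * X T ω) ∂μ
      ≤ (1 - l ^ 2) ^ T * ∫ ω, exp (l * X 0 ω) ∂μ + exp l / l ^ 2 :=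
        le_pow_mul_add_of_le_mul_add (a := fun t => ∫ ω, exp (l * X t ω) ∂μ) hρ (by positivity)
          hfixed hstep T
    _ ≤ (1 - l ^ 2) ^ T * exp (l * k) + exp l / l ^ 2 := by gcongr

end IntegerProcess

theorem stmt16_general (γ δ : ℝ) (hδ : 0 < δ) :
    ∃ c C k₀ : ℕ, ∀ k : ℕ, k₀ ≤ k →
    ∀ (Ω : Type) [mΩ : MeasurableSpace Ω] (μ : Measure Ω) [IsProbabilityMeasure μ]
      (𝒢 : Filtration ℕ mΩ) (D : ℕ → Ω → ℤ),
      Adapted 𝒢 D →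
      (∀ ω, |D 0 ω| ≤ (k : ℤ)) →
      (∀ t ω, |D (t + 1) ω - D t ω| ≤ 1) →
      (∀ t : ℕ, ∀ᵐ ω ∂μ, D t ω ≠ 0 →
        ((1 / 6 : ℝ) ≤
            (μ[Set.indicator {ω' | |D (t + 1) ω'| = |D t ω'| - 1}
                (fun _ => (1 : ℝ)) | 𝒢 t]) ω ∧
          (μ[Set.indicator {ω' | |D (t + 1) ω'| = |D t ω'| + 1}
              (fun _ => (1 : ℝ)) | 𝒢 t]) ω ≤
            (μ[Set.indicator {ω' | |D (t + 1) ω'| = |D t ω'| - 1}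
                (fun _ => (1 : ℝ)) | 𝒢 t]) ω - δ)) →
      ENNReal.ofReal (1 - (k : ℝ) ^ (-γ)) ≤
        μ {ω | ((|D (c * k) ω| : ℤ) : ℝ) ≤ (C : ℝ) * Real.log k} := by
  set l := min (δ / 4) 1
  have hl₀ : 0 < l := lt_min (by linarith) one_pos
  have hl₁ : l ≤ 1 := min_le_right _ _
  have hlδ : 4 * l ≤ δ := by linarith [min_le_left (δ / 4) 1]
  refine ⟨⌈1 / l⌉₊, ⌈(γ + 1) / l⌉₊, ⌈1 + exp l / l ^ 2⌉₊,
    fun k hk Ω _ μ _ 𝒢 D hD hD0 hinc hdrift => ?_⟩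
  have hk : 1 + exp l / l ^ 2 ≤ k := Nat.ceil_le.mp hk
  set X : ℕ → Ω → ℤ := fun t ω => |D t ω|
  have hX : Adapted 𝒢 X := fun t => (Measurable.of_discrete (f := fun n : ℤ => |n|)).comp (hD t)
  have hX₀ : ∀ ω, (X 0 ω : ℝ) ≤ k := fun ω => by exact_mod_cast hD0 ω
  have hXinc : ∀ t ω, |X (t + 1) ω - X t ω| ≤ 1 := fun t ω =>
    (abs_abs_sub_abs_le_abs_sub _ _).trans (hinc t ω)
  have hXdrift : ∀ t, ∀ᵐ ω ∂μ, X t ω ≠ 0 →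
      μ[(upStepSet X t).indicator (fun _ => 1) | 𝒢 t] ω ≤
        μ[(downStepSet X t).indicator (fun _ => 1) | 𝒢 t] ω - δ := fun t => by
    filter_upwards [hdrift t] with ω h hne using (h (abs_ne_zero.mp hne)).2
  have hmgf : mgf (fun ω => (X (⌈1 / l⌉₊ * k) ω : ℝ)) μ l ≤ k :=
    calc _ ≤ (1 - l ^ 2) ^ (⌈1 / l⌉₊ * k) * exp (l * k) + exp l / l ^ 2 :=
          integral_exp_mul_le hl₀ hl₁ hlδ hX hX₀ hXinc hXdrift _
      _ ≤ 1 + exp l / l ^ 2 := by gcongr; exact one_sub_sq_pow_mul_exp_le_one hl₀ hl₁ k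
      _ ≤ k := hk
  have hk₁ : (1 : ℝ) ≤ k := by linarith [div_nonneg (exp_pos l).le (sq_nonneg l)]
  refine le_trans (ENNReal.ofReal_le_ofReal ?_) (ofReal_one_sub_exp_mul_mgf_le_measure
    (Y := fun ω => (X (⌈1 / l⌉₊ * k) ω : ℝ))
    (Measurable.of_discrete.comp ((hX _).mono (𝒢.le _) le_rfl)) hl₀.le
    (integrable_exp_mul hl₀.le hX hX₀ hXinc _) _)
  linarith [exp_neg_mul_ceil_mul_log_mul_le (γ := γ) hl₀ hk₁ hmgf]

/-- a lazy walk `D` on ℤ with `|D₀| ≤ k`, increments bounded by 1,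
that whenever nonzero moves toward 0 with conditional probability at least `1/6`
and has drift toward 0 of at least `δ` (conditional probability of `|D|`
increasing is at most that of decreasing minus `δ`), satisfies
`|D_{ck}| ≤ O(log k)` with probability `1 − 1/poly(k)` for a sufficiently
large constant `c`. -/
theorem stmt16 (γ δ : ℝ) (hγ : 0 < γ) (hδ : 0 < δ) :
    ∃ c C k₀ : ℕ, ∀ k : ℕ, k₀ ≤ k →
    ∀ (Ω : Type) [mΩ : MeasurableSpace Ω] (μ : Measure Ω) [IsProbabilityMeasure μ]
      (𝒢 : Filtration ℕ mΩ) (D : ℕ → Ω → ℤ),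
      Adapted 𝒢 D →
      (∀ ω, |D 0 ω| ≤ (k : ℤ)) →
      (∀ t ω, |D (t + 1) ω - D t ω| ≤ 1) →
      (∀ t : ℕ, ∀ᵐ ω ∂μ, D t ω ≠ 0 →
        ((1 / 6 : ℝ) ≤
            (μ[Set.indicator {ω' | |D (t + 1) ω'| = |D t ω'| - 1}
                (fun _ => (1 : ℝ)) | 𝒢 t]) ω ∧
          (μ[Set.indicator {ω' | |D (t + 1) ω'| = |D t ω'| + 1}
              (fun _ => (1 : ℝ)) | 𝒢 t]) ω ≤
            (μ[Set.indicator {ω' | |D (t + 1) ω'| = |D t ω'| - 1}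
                (fun _ => (1 : ℝ)) | 𝒢 t]) ω - δ)) →
      ENNReal.ofReal (1 - (k : ℝ) ^ (-γ)) ≤
        μ {ω | ((|D (c * k) ω| : ℤ) : ℝ) ≤ (C : ℝ) * Real.log k} :=
  stmt16_general γ δ hδ
end
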